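/- arXiv:2107.04700 — 4 statements merged into one kernel-verified Lean document; each statement's English description precedes it below -/
import Mathlib

section
/- For the entropy-regularized transport problem with σ > 0, if π_{xy} = exp((Φ_{xy} − u_x − v_y)/σ) has margins p and q, then π is the unique maximizer over all couplings of (p,q) of the objective ∑ π_{xy} Φ_{xy} − σ ∑ π_{xy} log π_{xy}. -/
lemma entropic_aux_key (a b : ℝ) (ha : 0 ≤ a) (hb : 0 < b) :
    a - b ≤ a * Real.log a - a * Real.log b ∧
      ((a * Real.log a - a * Real.log b) - (a - b) = 0 → a = b) := by
  rcases ha.eq_or_lt with h0 | ha'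
  · subst h0
    constructor
    · simp; linarith
    · intro h; simp at h; linarith
  · have hda : 0 < b / a := div_pos hb ha'
    have h1 := Real.log_le_sub_one_of_pos hda
    rw [Real.log_div hb.ne' ha'.ne'] at h1
    have h2 : a * (Real.log b - Real.log a) ≤ b - a := by
      calc a * (Real.log b - Real.log a) ≤ a * (b / a - 1) :=
            mul_le_mul_of_nonneg_left h1 ha'.le
        _ = b - a := by field_simp
    constructor
    · nlinarith [h2]
    · intro h
      by_contra hne
      have hne' : b / a ≠ 1 := by
        intro h'
        rw [div_eq_one_iff_eq ha'.ne'] at h'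
        exact hne h'.symm
      have h3 := Real.log_lt_sub_one_of_pos hda hne'
      rw [Real.log_div hb.ne' ha'.ne'] at h3
      have h4 : a * (Real.log b - Real.log a) < a * (b / a - 1) :=
        mul_lt_mul_of_pos_left h3 ha'
      have h5 : a * (b / a - 1) = b - a := by field_simp
      nlinarith [h4]

theorem entropic_ot_gibbs_form_is_unique_maximizer
    {X Y : Type*} [Fintype X] [Fintype Y]
    (σ : ℝ) (hσ : 0 < σ) (Φ : X → Y → ℝ) (u : X → ℝ) (v : Y → ℝ)
    (p : X → ℝ) (q : Y → ℝ) (hp : ∀ x, 0 < p x) (hq : ∀ y, 0 < q y)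
    (hp1 : ∑ x, p x = 1) (hq1 : ∑ y, q y = 1)
    (π : X → Y → ℝ) (hπdef : ∀ x y, π x y = Real.exp ((Φ x y - u x - v y) / σ))
    (hrow : ∀ x, ∑ y, π x y = p x) (hcol : ∀ y, ∑ x, π x y = q y) :
    ∀ π' : X → Y → ℝ, (∀ x y, 0 ≤ π' x y) →
      (∀ x, ∑ y, π' x y = p x) → (∀ y, ∑ x, π' x y = q y) →
      (∑ x, ∑ y, π' x y * Φ x y - σ * ∑ x, ∑ y, π' x y * Real.log (π' x y)
        ≤ ∑ x, ∑ y, π x y * Φ x y - σ * ∑ x, ∑ y, π x y * Real.log (π x y)) ∧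
      ((∑ x, ∑ y, π' x y * Φ x y - σ * ∑ x, ∑ y, π' x y * Real.log (π' x y)
        = ∑ x, ∑ y, π x y * Φ x y - σ * ∑ x, ∑ y, π x y * Real.log (π x y)) → π' = π) := by
  intro π' hnn hrow' hcol'
  have hπpos : ∀ x y, 0 < π x y := fun x y => (hπdef x y) ▸ Real.exp_pos _
  have hΦ : ∀ x y, Φ x y = σ * Real.log (π x y) + u x + v y := by
    intro x y
    rw [hπdef, Real.log_exp]
    field_simp
    ring
  -- Gibbs variational identity for any coupling ρ
  have hF : ∀ ρ : X → Y → ℝ, (∀ x, ∑ y, ρ x y = p x) → (∀ y, ∑ x, ρ x y = q y) →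
      ∑ x, ∑ y, ρ x y * Φ x y - σ * ∑ x, ∑ y, ρ x y * Real.log (ρ x y)
      = (∑ x, u x * p x) + (∑ y, v y * q y)
        - σ * ∑ x, ∑ y, (ρ x y * Real.log (ρ x y) - ρ x y * Real.log (π x y)) := by
    intro ρ hr hc
    have h1 : ∑ x, ∑ y, ρ x y * Φ x y
        = σ * (∑ x, ∑ y, ρ x y * Real.log (π x y))
          + (∑ x, u x * p x) + (∑ y, v y * q y) := by
      have e1 : ∀ x, ∑ y, ρ x y * Φ x y
          = σ * (∑ y, ρ x y * Real.log (π x y)) + u x * p x + (∑ y, ρ x y * v y) := by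
        intro x
        rw [← hr x, Finset.mul_sum, Finset.mul_sum, ← Finset.sum_add_distrib,
          ← Finset.sum_add_distrib]
        refine Finset.sum_congr rfl fun y _ => ?_
        rw [hΦ x y]; ring
      rw [Finset.sum_congr rfl fun x _ => e1 x, Finset.sum_add_distrib,
        Finset.sum_add_distrib, ← Finset.mul_sum]
      congr 1
      rw [Finset.sum_comm]
      refine Finset.sum_congr rfl fun y _ => ?_
      rw [← Finset.sum_mul, hc y]
      ring
    have h2 : ∑ x, ∑ y, (ρ x y * Real.log (ρ x y) - ρ x y * Real.log (π x y))
        = (∑ x, ∑ y, ρ x y * Real.log (ρ x y)) - ∑ x, ∑ y, ρ x y * Real.log (π x y) := by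
      rw [← Finset.sum_sub_distrib]
      exact Finset.sum_congr rfl fun x _ => Finset.sum_sub_distrib _ _
    rw [h1, h2]
    ring
  have hFπ := hF π hrow hcol
  have hFπ' := hF π' hrow' hcol'
  -- KL term for π is zero
  have hSπ : ∑ x, ∑ y, (π x y * Real.log (π x y) - π x y * Real.log (π x y)) = 0 := by
    simp
  -- total mass of difference is zero
  have hmass : ∑ x, ∑ y, (π' x y - π x y) = 0 := by
    have h : ∀ x, ∑ y, (π' x y - π x y) = 0 := by
      intro x; rw [Finset.sum_sub_distrib, hrow' x, hrow x]; ring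
    simp [h]
  -- pointwise bound
  have hpt : ∀ x y, 0 ≤ (π' x y * Real.log (π' x y) - π' x y * Real.log (π x y))
      - (π' x y - π x y) := fun x y => by
    linarith [(entropic_aux_key (π' x y) (π x y) (hnn x y) (hπpos x y)).1]
  have hsplit : ∑ x, ∑ y, (π' x y * Real.log (π' x y) - π' x y * Real.log (π x y))
      = (∑ x, ∑ y, ((π' x y * Real.log (π' x y) - π' x y * Real.log (π x y))
          - (π' x y - π x y)))
        + ∑ x, ∑ y, (π' x y - π x y) := by
    rw [← Finset.sum_add_distrib]
    refine Finset.sum_congr rfl fun x _ => ?_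
    rw [← Finset.sum_add_distrib]
    exact Finset.sum_congr rfl fun y _ => by ring
  have hSnn : 0 ≤ ∑ x, ∑ y, (π' x y * Real.log (π' x y) - π' x y * Real.log (π x y)) := by
    rw [hsplit, hmass, add_zero]
    exact Finset.sum_nonneg fun x _ => Finset.sum_nonneg fun y _ => hpt x y
  rw [hFπ, hFπ', hSπ, mul_zero, sub_zero]
  constructor
  · nlinarith [hSnn]
  · intro heq
    have hSzero : ∑ x, ∑ y, (π' x y * Real.log (π' x y) - π' x y * Real.log (π x y)) = 0 := by
      have : σ * ∑ x, ∑ y, (π' x y * Real.log (π' x y) - π' x y * Real.log (π x y)) = 0 := by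
        linarith [heq]
      exact (mul_eq_zero.mp this).resolve_left hσ.ne'
    have hTzero : ∑ x, ∑ y, ((π' x y * Real.log (π' x y) - π' x y * Real.log (π x y))
        - (π' x y - π x y)) = 0 := by
      rw [hSzero, hmass, add_zero] at hsplit
      linarith [hsplit]
    have hinner : ∀ x ∈ Finset.univ, ∑ y, ((π' x y * Real.log (π' x y)
        - π' x y * Real.log (π x y)) - (π' x y - π x y)) = 0 := by
      rw [← Finset.sum_eq_zero_iff_of_nonneg
        (fun x _ => Finset.sum_nonneg fun y _ => hpt x y)]
      exact hTzero
    funext x y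
    have h0 : ((π' x y * Real.log (π' x y) - π' x y * Real.log (π x y))
        - (π' x y - π x y)) = 0 := by
      have := (Finset.sum_eq_zero_iff_of_nonneg (fun y _ => hpt x y)).mp
        (hinner x (Finset.mem_univ x)) y (Finset.mem_univ y)
      exact this
    exact (entropic_aux_key (π' x y) (π x y) (hnn x y) (hπpos x y)).2 h0
end

section
/- Stable matchings are dual pairs (Becker–Shapley–Shubik, one direction): if (π, u, v) is a stable outcome — i.e., π ≥ 0 with ∑_y π_{xy} ≤ p_x and ∑_x π_{xy} ≤ q_y, u ≥ 0, v ≥ 0, u_x + v_y ≥ Φ_{xy} for all x,y, π_{xy} > 0 ⟹ u_x + v_y = Φ_{xy}, ∑_y π_{xy} < p_x ⟹ u_x = 0, and ∑_x π_{xy} < q_y ⟹ v_y = 0 — then π maximizes ∑ π_{xy} Φ_{xy} subject to the margin inequality constraints, and (u,v) minimizes ∑ p_x u_x + ∑ q_y v_y subject to u,v ≥ 0 and u_x + v_y ≥ Φ_{xy}. -/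
theorem becker_shapley_shubik_stable_implies_optimal
    {X Y : Type*} [Fintype X] [Fintype Y]
    (p : X → ℝ) (q : Y → ℝ) (hp : ∀ x, 0 ≤ p x) (hq : ∀ y, 0 ≤ q y)
    (Φ : X → Y → ℝ) (π : X → Y → ℝ) (u : X → ℝ) (v : Y → ℝ)
    (hπ : ∀ x y, 0 ≤ π x y)
    (hrow : ∀ x, ∑ y, π x y ≤ p x) (hcol : ∀ y, ∑ x, π x y ≤ q y)
    (hu : ∀ x, 0 ≤ u x) (hv : ∀ y, 0 ≤ v y)
    (hd : ∀ x y, u x + v y ≥ Φ x y)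
    (hcs : ∀ x y, 0 < π x y → u x + v y = Φ x y)
    (hcsu : ∀ x, ∑ y, π x y < p x → u x = 0)
    (hcsv : ∀ y, ∑ x, π x y < q y → v y = 0) :
    (∀ π' : X → Y → ℝ, (∀ x y, 0 ≤ π' x y) →
      (∀ x, ∑ y, π' x y ≤ p x) → (∀ y, ∑ x, π' x y ≤ q y) →
      ∑ x, ∑ y, π' x y * Φ x y ≤ ∑ x, ∑ y, π x y * Φ x y) ∧
    (∀ (u' : X → ℝ) (v' : Y → ℝ), (∀ x, 0 ≤ u' x) → (∀ y, 0 ≤ v' y) →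
      (∀ x y, u' x + v' y ≥ Φ x y) →
      ∑ x, p x * u x + ∑ y, q y * v y ≤ ∑ x, p x * u' x + ∑ y, q y * v' y) := by
  -- general rearrangement lemma
  have split : ∀ (σ : X → Y → ℝ) (a : X → ℝ) (b : Y → ℝ),
      ∑ x, ∑ y, σ x y * (a x + b y)
        = ∑ x, (∑ y, σ x y) * a x + ∑ y, (∑ x, σ x y) * b y := by
    intro σ a b
    have h1 : ∀ x, ∑ y, σ x y * (a x + b y)
        = (∑ y, σ x y) * a x + ∑ y, σ x y * b y := by
      intro x
      simp only [mul_add, Finset.sum_add_distrib, Finset.sum_mul]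
    calc ∑ x, ∑ y, σ x y * (a x + b y)
        = ∑ x, ((∑ y, σ x y) * a x + ∑ y, σ x y * b y) := by
          exact Finset.sum_congr rfl fun x _ => h1 x
      _ = ∑ x, (∑ y, σ x y) * a x + ∑ x, ∑ y, σ x y * b y := by
          rw [Finset.sum_add_distrib]
      _ = ∑ x, (∑ y, σ x y) * a x + ∑ y, (∑ x, σ x y) * b y := by
          congr 1
          rw [Finset.sum_comm]
          exact Finset.sum_congr rfl fun y _ => (Finset.sum_mul _ _ _).symm
  -- key equality: ∑∑ π Φ = ∑ p u + ∑ q v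
  have keyeq : ∑ x, ∑ y, π x y * Φ x y = ∑ x, p x * u x + ∑ y, q y * v y := by
    have e1 : ∑ x, ∑ y, π x y * Φ x y = ∑ x, ∑ y, π x y * (u x + v y) := by
      apply Finset.sum_congr rfl; intro x _
      apply Finset.sum_congr rfl; intro y _
      rcases lt_or_eq_of_le (hπ x y) with h | h
      · rw [hcs x y h]
      · rw [← h]; ring
    rw [e1, split]
    congr 1
    · apply Finset.sum_congr rfl; intro x _
      rcases lt_or_eq_of_le (hrow x) with h | h
      · rw [hcsu x h]; ring
      · rw [h, mul_comm]
    · apply Finset.sum_congr rfl; intro y _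
      rcases lt_or_eq_of_le (hcol y) with h | h
      · rw [hcsv y h]; ring
      · rw [h, mul_comm]
  constructor
  · intro π' hπ' hrow' hcol'
    rw [keyeq]
    calc ∑ x, ∑ y, π' x y * Φ x y
        ≤ ∑ x, ∑ y, π' x y * (u x + v y) := by
          apply Finset.sum_le_sum; intro x _
          apply Finset.sum_le_sum; intro y _
          exact mul_le_mul_of_nonneg_left (hd x y) (hπ' x y)
      _ = ∑ x, (∑ y, π' x y) * u x + ∑ y, (∑ x, π' x y) * v y := split π' u v
      _ ≤ ∑ x, p x * u x + ∑ y, q y * v y := by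
          apply add_le_add
          · exact Finset.sum_le_sum fun x _ =>
              mul_le_mul_of_nonneg_right (hrow' x) (hu x)
          · exact Finset.sum_le_sum fun y _ =>
              mul_le_mul_of_nonneg_right (hcol' y) (hv y)
  · intro u' v' hu' hv' hd'
    rw [← keyeq]
    calc ∑ x, ∑ y, π x y * Φ x y
        ≤ ∑ x, ∑ y, π x y * (u' x + v' y) := by
          apply Finset.sum_le_sum; intro x _
          apply Finset.sum_le_sum; intro y _
          exact mul_le_mul_of_nonneg_left (hd' x y) (hπ x y)
      _ = ∑ x, (∑ y, π x y) * u' x + ∑ y, (∑ x, π x y) * v' y := split π u' v'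
      _ ≤ ∑ x, p x * u' x + ∑ y, q y * v' y := by
          apply add_le_add
          · exact Finset.sum_le_sum fun x _ =>
              mul_le_mul_of_nonneg_right (hrow x) (hu' x)
          · exact Finset.sum_le_sum fun y _ =>
              mul_le_mul_of_nonneg_right (hcol y) (hv' y)
end

section
/- Quantile transform as optimal transport (univariate Monge–Kantorovich): let P be the uniform distribution on [0,1] and Q a probability measure on ℝ with finite second moment, with quantile function F_Q^{-1}. If X ∼ P and Y = F_Q^{-1}(X), then Y ∼ Q, and for any random pair (X', Y') with X' ∼ P and Y' ∼ Q one has E[X'Y'] ≤ E[X · F_Q^{-1}(X)]. -/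
open MeasureTheory

open Set Filter ProbabilityTheory
open scoped Topology

/-- The generalized inverse (quantile function) of the CDF of `Q`. -/
noncomputable def quantileFun (Q : Measure ℝ) (t : ℝ) : ℝ :=
  sInf {y : ℝ | (Q (Set.Iic y)).toReal ≥ t}

/-- The uniform (Lebesgue) probability measure on `[0,1]`. -/
noncomputable def uniform01 : Measure ℝ := volume.restrict (Set.Icc (0 : ℝ) 1)

instance : IsProbabilityMeasure uniform01 := by
  constructor
  simp [uniform01, Real.volume_Icc]

lemma quantileFun_eq (Q : Measure ℝ) [IsProbabilityMeasure Q] (t : ℝ) :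
    quantileFun Q t = sInf {y : ℝ | t ≤ cdf Q y} := by
  unfold quantileFun
  congr 1
  ext y
  simp [cdf_eq_real, measureReal_def, ge_iff_le]

lemma quantile_gc (Q : Measure ℝ) [IsProbabilityMeasure Q] {t : ℝ} (ht0 : 0 < t) (ht1 : t < 1)
    (y : ℝ) : quantileFun Q t ≤ y ↔ t ≤ cdf Q y := by
  rw [quantileFun_eq]
  set S := {y : ℝ | t ≤ cdf Q y} with hS
  have hne : S.Nonempty := by
    have h1 := (tendsto_cdf_atTop Q).eventually (eventually_ge_nhds ht1)
    obtain ⟨y, hy⟩ := h1.exists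
    exact ⟨y, hy⟩
  have hbdd : BddBelow S := by
    have : ∀ᶠ y in atBot, cdf Q y < t := (tendsto_cdf_atBot Q).eventually_lt_const ht0
    obtain ⟨y0, hy0⟩ := this.exists
    exact ⟨y0, fun z hz => le_of_not_gt fun h => absurd (hz.trans ((cdf Q).mono h.le)) (not_le.2 hy0)⟩
  have hmem : sInf S ∈ S := by
    have hrc : Tendsto (cdf Q) (𝓝[>] (sInf S)) (𝓝 (cdf Q (sInf S))) := by
      have := (cdf Q).right_continuous (sInf S)
      exact this.tendsto.mono_left (nhdsWithin_mono _ Ioi_subset_Ici_self)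
    refine ge_of_tendsto hrc ?_
    filter_upwards [self_mem_nhdsWithin] with z hz
    obtain ⟨w, hwS, hw⟩ := (csInf_lt_iff hbdd hne).1 hz
    exact hwS.trans ((cdf Q).mono hw.le)
  constructor
  · intro h
    exact hmem.trans ((cdf Q).mono h)
  · intro h
    exact csInf_le hbdd h

lemma quantile_monoOn (Q : Measure ℝ) [IsProbabilityMeasure Q] :
    MonotoneOn (quantileFun Q) (Ioo 0 1) := by
  intro a ha b hb hab
  rw [quantile_gc Q ha.1 ha.2]
  exact hab.trans ((quantile_gc Q hb.1 hb.2 _).1 le_rfl)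

lemma quantile_aemeasurable (Q : Measure ℝ) [IsProbabilityMeasure Q] :
    AEMeasurable (quantileFun Q) uniform01 := by
  have h := aemeasurable_restrict_of_monotoneOn (μ := volume) measurableSet_Ioo (quantile_monoOn Q)
  unfold uniform01
  rwa [Measure.restrict_congr_set Ioo_ae_eq_Icc] at h

lemma map_quantile (Q : Measure ℝ) [IsProbabilityMeasure Q] :
    Measure.map (quantileFun Q) uniform01 = Q := by
  refine Measure.ext_of_Iic _ _ (fun y => ?_)
  rw [Measure.map_apply_of_aemeasurable (quantile_aemeasurable Q) measurableSet_Iic]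
  set c := cdf Q y with hc
  have hc0 : 0 ≤ c := cdf_nonneg Q y
  have hc1 : c ≤ 1 := cdf_le_one Q y
  have h1 : uniform01 (quantileFun Q ⁻¹' Iic y) = volume (quantileFun Q ⁻¹' Iic y ∩ Icc 0 1) :=
    Measure.restrict_apply' measurableSet_Icc
  have h2 : volume (quantileFun Q ⁻¹' Iic y ∩ Icc 0 1)
      = volume (quantileFun Q ⁻¹' Iic y ∩ Ioo 0 1) :=
    (measure_congr ((EventuallyEq.refl _ _).inter Ioo_ae_eq_Icc)).symm
  have hset : quantileFun Q ⁻¹' Iic y ∩ Ioo 0 1 = Iic c ∩ Ioo 0 1 := by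
    ext t
    simp only [mem_inter_iff, mem_preimage, mem_Iic, mem_Ioo]
    constructor
    · rintro ⟨h1, h2⟩
      exact ⟨(quantile_gc Q h2.1 h2.2 y).1 h1, h2⟩
    · rintro ⟨h1, h2⟩
      exact ⟨(quantile_gc Q h2.1 h2.2 y).2 h1, h2⟩
  have h3 : volume (Iic c ∩ Ioo 0 1) = ENNReal.ofReal c := by
    apply le_antisymm
    · calc volume (Iic c ∩ Ioo 0 1) ≤ volume (Ioc 0 c) := by
            apply measure_mono
            rintro t ⟨ht1, ht2⟩
            exact ⟨ht2.1, ht1⟩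
        _ = ENNReal.ofReal c := by rw [Real.volume_Ioc, sub_zero]
    · calc ENNReal.ofReal c = volume (Ioo 0 c) := by rw [Real.volume_Ioo, sub_zero]
        _ ≤ volume (Iic c ∩ Ioo 0 1) := by
            apply measure_mono
            rintro t ⟨ht1, ht2⟩
            exact ⟨ht2.le, ht1, lt_of_lt_of_le ht2 hc1⟩
  rw [h1, h2, hset, h3, hc, ofReal_cdf]

lemma integrable_id_Q (Q : Measure ℝ) [IsProbabilityMeasure Q]
    (hQ2 : Integrable (fun y : ℝ => y ^ 2) Q) : Integrable (fun y : ℝ => y) Q := by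
  have h2 : MemLp (fun y : ℝ => y) 2 Q :=
    (memLp_two_iff_integrable_sq aestronglyMeasurable_id).2 (by simpa using hQ2)
  exact h2.integrable one_le_two

lemma integrable_quantile (Q : Measure ℝ) [IsProbabilityMeasure Q]
    (hQ2 : Integrable (fun y : ℝ => y ^ 2) Q) : Integrable (quantileFun Q) uniform01 := by
  have h1 : Integrable (fun y : ℝ => y) (Measure.map (quantileFun Q) uniform01) := by
    rw [map_quantile]; exact integrable_id_Q Q hQ2
  simpa using (integrable_map_measure aestronglyMeasurable_id (quantile_aemeasurable Q)).1 h1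

lemma uniform01_integral_eq (f : ℝ → ℝ) :
    ∫ t, f t ∂uniform01 = ∫ t in Ioo (0:ℝ) 1, f t := by
  show ∫ t in Icc (0:ℝ) 1, f t = _
  rw [← Measure.restrict_congr_set Ioo_ae_eq_Icc]

lemma hl_step (Q : Measure ℝ) [IsProbabilityMeasure Q] (hQ2 : Integrable (fun y : ℝ => y ^ 2) Q)
    {Ω : Type} [MeasurableSpace Ω] (μ : Measure Ω) [IsProbabilityMeasure μ]
    (X Y : Ω → ℝ) (hX : Measurable X) (hY : Measurable Y)
    (hmX : Measure.map X μ = uniform01) (hmY : Measure.map Y μ = Q)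
    {s : ℝ} (hs0 : 0 < s) (hs1 : s < 1) :
    ∫ ω, (if s < X ω then Y ω else 0) ∂μ
      ≤ ∫ t, (if s < t then quantileFun Q t else 0) ∂uniform01 := by
  set c := quantileFun Q s with hc
  have hYint : Integrable Y μ := by
    have h1 : Integrable (fun y : ℝ => y) (Measure.map Y μ) := by
      rw [hmY]; exact integrable_id_Q Q hQ2
    simpa using (integrable_map_measure aestronglyMeasurable_id hY.aemeasurable).1 h1
  have hqint : Integrable (quantileFun Q) uniform01 := integrable_quantile Q hQ2
  have hqIcc : IntegrableOn (quantileFun Q) (Icc 0 1) volume := hqint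
  -- RHS equals ∫ over Ioo s 1 of quantileFun
  have hRHS : ∫ t, (if s < t then quantileFun Q t else 0) ∂uniform01
      = ∫ t in Ioo s 1, quantileFun Q t := by
    rw [uniform01_integral_eq]
    have h1 : (fun t => if s < t then quantileFun Q t else 0)
        = (Ioi s).indicator (quantileFun Q) := by
      funext t
      by_cases h : s < t
      · rw [if_pos h, Set.indicator_of_mem (by simpa using h)]
      · rw [if_neg h, Set.indicator_of_notMem (by simpa using h)]
    rw [h1, setIntegral_indicator measurableSet_Ioi]
    have hset : Ioo (0:ℝ) 1 ∩ Ioi s = Ioo s 1 := by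
      ext t
      simp only [mem_inter_iff, mem_Ioo, mem_Ioi]
      constructor
      · rintro ⟨⟨_, h1⟩, h2⟩; exact ⟨h2, h1⟩
      · rintro ⟨h1, h2⟩; exact ⟨⟨hs0.trans h1, h2⟩, h1⟩
    rw [hset]
  -- pointwise bound
  have hpt : ∀ ω, (if s < X ω then Y ω else 0)
      ≤ max (Y ω - c) 0 + (if s < X ω then c else 0) := by
    intro ω
    split_ifs with h
    · have := le_max_left (Y ω - c) 0
      linarith
    · have := le_max_right (Y ω - c) 0
      linarith
  have hind : (fun ω => if s < X ω then Y ω else 0) = (X ⁻¹' Ioi s).indicator Y := by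
    funext ω
    by_cases h : s < X ω
    · rw [if_pos h, Set.indicator_of_mem (by simpa using h)]
    · rw [if_neg h, Set.indicator_of_notMem (by simpa using h)]
  have hindc : (fun ω => if s < X ω then c else 0)
      = (X ⁻¹' Ioi s).indicator (fun _ => c) := by
    funext ω
    by_cases h : s < X ω
    · rw [if_pos h, Set.indicator_of_mem (by simpa using h)]
    · rw [if_neg h, Set.indicator_of_notMem (by simpa using h)]
  have hint1 : Integrable (fun ω => if s < X ω then Y ω else 0) μ := by
    rw [hind]; exact hYint.indicator (hX measurableSet_Ioi)
  have hintmax : Integrable (fun ω => max (Y ω - c) 0) μ :=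
    (hYint.sub (integrable_const c)).pos_part
  have hintc : Integrable (fun ω => if s < X ω then c else 0) μ := by
    rw [hindc]; exact (integrable_const c).indicator (hX measurableSet_Ioi)
  have step1 : ∫ ω, (if s < X ω then Y ω else 0) ∂μ
      ≤ ∫ ω, (max (Y ω - c) 0 + if s < X ω then c else 0) ∂μ :=
    integral_mono hint1 (hintmax.add hintc) hpt
  have step2 : ∫ ω, (max (Y ω - c) 0 + if s < X ω then c else 0) ∂μ
      = (∫ ω, max (Y ω - c) 0 ∂μ) + ∫ ω, (if s < X ω then c else 0) ∂μ :=
    integral_add hintmax hintc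
  -- the indicator-of-c integral
  have hmeas_pre : μ (X ⁻¹' Ioi s) = ENNReal.ofReal (1 - s) := by
    rw [← Measure.map_apply hX measurableSet_Ioi, hmX]
    show volume.restrict (Icc 0 1) (Ioi s) = _
    rw [Measure.restrict_apply measurableSet_Ioi]
    have : Ioi s ∩ Icc 0 1 = Ioc s 1 := by
      ext t
      simp only [mem_inter_iff, mem_Ioi, mem_Icc, mem_Ioc]
      constructor
      · rintro ⟨h1, _, h2⟩; exact ⟨h1, h2⟩
      · rintro ⟨h1, h2⟩; exact ⟨h1, (hs0.trans h1).le, h2⟩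
    rw [this, Real.volume_Ioc]
  have step3 : ∫ ω, (if s < X ω then c else 0) ∂μ = (1 - s) * c := by
    rw [hindc, integral_indicator_const _ (hX measurableSet_Ioi), measureReal_def, hmeas_pre,
      ENNReal.toReal_ofReal (by linarith), smul_eq_mul]
  -- transfer max integral to quantile side
  have hg : Continuous (fun y : ℝ => max (y - c) 0) :=
    (continuous_id.sub continuous_const).max continuous_const
  have step4 : ∫ ω, max (Y ω - c) 0 ∂μ = ∫ t, max (quantileFun Q t - c) 0 ∂uniform01 := by
    have h1 : ∫ y, max (y - c) 0 ∂(Measure.map Y μ) = ∫ ω, max (Y ω - c) 0 ∂μ :=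
      integral_map hY.aemeasurable hg.aestronglyMeasurable
    have h2 : ∫ y, max (y - c) 0 ∂(Measure.map (quantileFun Q) uniform01)
        = ∫ t, max (quantileFun Q t - c) 0 ∂uniform01 :=
      integral_map (quantile_aemeasurable Q) hg.aestronglyMeasurable
    rw [← h1, ← h2, hmY, map_quantile]
  have hintq : Integrable (fun t => max (quantileFun Q t - c) 0) uniform01 :=
    (hqint.sub (integrable_const c)).pos_part
  have hintqOn : IntegrableOn (fun t => max (quantileFun Q t - c) 0) (Icc 0 1) volume := hintq
  have step5 : ∫ t, max (quantileFun Q t - c) 0 ∂uniform01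
      = ∫ t in Ioo s 1, (quantileFun Q t - c) := by
    rw [uniform01_integral_eq]
    rw [← Ioc_union_Ioo_eq_Ioo hs0.le hs1]
    have hdisj : Disjoint (Ioc (0:ℝ) s) (Ioo s 1) := by
      rw [Set.disjoint_left]
      rintro t ⟨_, h1⟩ ⟨h2, _⟩
      exact absurd h1 (not_le.2 h2)
    rw [setIntegral_union hdisj measurableSet_Ioo
      (hintqOn.mono_set (fun t ht => ⟨ht.1.le, ht.2.trans hs1.le⟩))
      (hintqOn.mono_set (fun t ht => ⟨(hs0.trans ht.1).le, ht.2.le⟩))]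
    have hz : ∫ t in Ioc (0:ℝ) s, max (quantileFun Q t - c) 0 = 0 := by
      rw [setIntegral_congr_fun measurableSet_Ioc (g := fun _ => (0:ℝ))]
      · simp
      · intro t ht
        have hmem : t ∈ Ioo (0:ℝ) 1 := ⟨ht.1, lt_of_le_of_lt ht.2 hs1⟩
        have := quantile_monoOn Q hmem ⟨hs0, hs1⟩ ht.2
        simp only
        rw [max_eq_right (by linarith)]
    have he : ∫ t in Ioo s 1, max (quantileFun Q t - c) 0
        = ∫ t in Ioo s 1, (quantileFun Q t - c) := by
      apply setIntegral_congr_fun measurableSet_Ioo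
      intro t ht
      have hmem : t ∈ Ioo (0:ℝ) 1 := ⟨hs0.trans ht.1, ht.2⟩
      have := quantile_monoOn Q ⟨hs0, hs1⟩ hmem ht.1.le
      simp only
      rw [max_eq_left (by linarith)]
    rw [hz, he, zero_add]
  have step6 : ∫ t in Ioo s 1, (quantileFun Q t - c)
      = (∫ t in Ioo s 1, quantileFun Q t) - (1 - s) * c := by
    rw [integral_sub (hqIcc.mono_set (fun t ht => ⟨(hs0.trans ht.1).le, ht.2.le⟩))
      (integrableOn_const (by rw [Real.volume_Ioo]; exact ENNReal.ofReal_ne_top))]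
    rw [setIntegral_const, measureReal_def, Real.volume_Ioo, ENNReal.toReal_ofReal (by linarith), smul_eq_mul]
  rw [hRHS]
  calc ∫ ω, (if s < X ω then Y ω else 0) ∂μ
      ≤ (∫ ω, max (Y ω - c) 0 ∂μ) + ∫ ω, (if s < X ω then c else 0) ∂μ := by
        rw [← step2]; exact step1
    _ = ((∫ t in Ioo s 1, quantileFun Q t) - (1 - s) * c) + (1 - s) * c := by
        rw [step4, step5, step6, step3]
    _ = ∫ t in Ioo s 1, quantileFun Q t := by ring

lemma fubini_key {Ω : Type} [MeasurableSpace Ω] (μ : Measure Ω) [IsProbabilityMeasure μ]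
    (X Y : Ω → ℝ) (hX : Measurable X) (hY : Measurable Y)
    (hXr : ∀ᵐ ω ∂μ, X ω ∈ Icc (0:ℝ) 1) (hYint : Integrable Y μ) :
    Integrable (fun s => ∫ ω, (if s < X ω then Y ω else 0) ∂μ) uniform01 ∧
    ∫ ω, X ω * Y ω ∂μ = ∫ s, (∫ ω, (if s < X ω then Y ω else 0) ∂μ) ∂uniform01 := by
  set F : ℝ × Ω → ℝ := fun p => if p.1 < X p.2 then Y p.2 else 0 with hF
  have hFmeas : Measurable F :=
    Measurable.ite (measurableSet_lt measurable_fst (hX.comp measurable_snd))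
      (hY.comp measurable_snd) measurable_const
  have hYsnd : Integrable (fun p : ℝ × Ω => Y p.2) (uniform01.prod μ) := by
    have h1 : Integrable Y (Measure.map Prod.snd (uniform01.prod μ)) := by
      rw [Measure.map_snd_prod]
      simpa using hYint
    exact (integrable_map_measure hY.aestronglyMeasurable measurable_snd.aemeasurable).1 h1
  have hFint : Integrable F (uniform01.prod μ) := by
    refine hYsnd.mono hFmeas.aestronglyMeasurable (ae_of_all _ fun p => ?_)
    simp only [hF, Real.norm_eq_abs]
    split_ifs <;> simp [abs_nonneg]
  have hswap : ∫ s, (∫ ω, F (s, ω) ∂μ) ∂uniform01 = ∫ ω, (∫ s, F (s, ω) ∂uniform01) ∂μ :=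
    integral_integral_swap hFint
  have hinner : ∀ᵐ ω ∂μ, (∫ s, F (s, ω) ∂uniform01) = X ω * Y ω := by
    filter_upwards [hXr] with ω hω
    have h1 : (fun s => F (s, ω)) = (Iio (X ω)).indicator (fun _ => Y ω) := by
      ext s; simp [hF, Set.indicator_apply]
    rw [h1, integral_indicator_const _ measurableSet_Iio]
    have h2 : uniform01 (Iio (X ω)) = ENNReal.ofReal (X ω) := by
      rw [uniform01, Measure.restrict_apply measurableSet_Iio]
      have h3 : Iio (X ω) ∩ Icc 0 1 = Ico 0 (X ω) := by
        ext t
        simp only [mem_inter_iff, mem_Iio, mem_Icc, mem_Ico]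
        constructor
        · rintro ⟨h, h0, _⟩; exact ⟨h0, h⟩
        · rintro ⟨h0, h⟩; exact ⟨h, h0, h.le.trans hω.2⟩
      rw [h3, Real.volume_Ico, sub_zero]
    rw [measureReal_def, h2, ENNReal.toReal_ofReal hω.1, smul_eq_mul]
  constructor
  · exact hFint.integral_prod_left
  · rw [hswap, integral_congr_ae hinner]

theorem quantile_transform_optimal_transport
    (Q : Measure ℝ) [IsProbabilityMeasure Q]
    (hQ2 : Integrable (fun y : ℝ => y ^ 2) Q) :
    Measure.map (quantileFun Q) uniform01 = Q ∧
    ∀ {Ω : Type} [MeasurableSpace Ω] (μ : Measure Ω) [IsProbabilityMeasure μ]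
      (X' Y' : Ω → ℝ), AEMeasurable X' μ → AEMeasurable Y' μ →
      Measure.map X' μ = uniform01 → Measure.map Y' μ = Q →
      ∫ ω, X' ω * Y' ω ∂μ ≤ ∫ x, x * quantileFun Q x ∂uniform01 := by
  refine ⟨map_quantile Q, ?_⟩
  intro Ω _ μ _ X' Y' hX' hY' hmX' hmY'
  set X := hX'.mk X' with hXdef
  set Y := hY'.mk Y' with hYdef
  have hXm : Measurable X := hX'.measurable_mk
  have hYm : Measurable Y := hY'.measurable_mk
  have haeX : X' =ᵐ[μ] X := hX'.ae_eq_mk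
  have haeY : Y' =ᵐ[μ] Y := hY'.ae_eq_mk
  have hmX : Measure.map X μ = uniform01 := by rw [← Measure.map_congr haeX]; exact hmX'
  have hmY : Measure.map Y μ = Q := by rw [← Measure.map_congr haeY]; exact hmY'
  have hXY : ∫ ω, X' ω * Y' ω ∂μ = ∫ ω, X ω * Y ω ∂μ :=
    integral_congr_ae (haeX.mul haeY)
  have hqae := quantile_aemeasurable Q
  set qm := hqae.mk (quantileFun Q) with hqmdef
  have hqm : Measurable qm := hqae.measurable_mk
  have haeq : quantileFun Q =ᵐ[uniform01] qm := hqae.ae_eq_mk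
  have hYint : Integrable Y μ := by
    have h1 : Integrable (fun y : ℝ => y) (Measure.map Y μ) := by
      rw [hmY]; exact integrable_id_Q Q hQ2
    simpa using (integrable_map_measure aestronglyMeasurable_id hYm.aemeasurable).1 h1
  have hqmint : Integrable qm uniform01 := (integrable_quantile Q hQ2).congr haeq
  have hXr : ∀ᵐ ω ∂μ, X ω ∈ Icc (0:ℝ) 1 := by
    rw [ae_iff]
    have : {ω | ¬ X ω ∈ Icc (0:ℝ) 1} = X ⁻¹' (Icc (0:ℝ) 1)ᶜ := rfl
    rw [this, ← Measure.map_apply hXm measurableSet_Icc.compl, hmX]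
    show volume.restrict (Icc 0 1) _ = 0
    rw [Measure.restrict_apply measurableSet_Icc.compl]
    simp
  have hidr : ∀ᵐ t ∂uniform01, t ∈ Icc (0:ℝ) 1 := by
    show ∀ᵐ t ∂(volume.restrict (Icc (0:ℝ) 1)), t ∈ Icc (0:ℝ) 1
    exact ae_restrict_mem measurableSet_Icc
  obtain ⟨hint1, heq1⟩ := fubini_key μ X Y hXm hYm hXr hYint
  obtain ⟨hint2, heq2⟩ :=
    fubini_key uniform01 (fun t => t) qm measurable_id hqm hidr hqmint
  have hR : ∫ x, x * quantileFun Q x ∂uniform01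
      = ∫ s, (∫ t, (if s < t then qm t else 0) ∂uniform01) ∂uniform01 := by
    rw [← heq2]
    exact integral_congr_ae (haeq.mono fun t ht => by simp [ht])
  have hsae : ∀ᵐ s ∂uniform01, s ∈ Ioo (0:ℝ) 1 := by
    show ∀ᵐ s ∂(volume.restrict (Icc (0:ℝ) 1)), s ∈ Ioo (0:ℝ) 1
    rw [← Measure.restrict_congr_set Ioo_ae_eq_Icc]
    exact ae_restrict_mem measurableSet_Ioo
  have hmono : (fun s => ∫ ω, (if s < X ω then Y ω else 0) ∂μ)
      ≤ᵐ[uniform01] (fun s => ∫ t, (if s < t then qm t else 0) ∂uniform01) := by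
    filter_upwards [hsae] with s hs
    have h1 := hl_step Q hQ2 μ X Y hXm hYm hmX hmY hs.1 hs.2
    have h2 : ∫ t, (if s < t then quantileFun Q t else 0) ∂uniform01
        = ∫ t, (if s < t then qm t else 0) ∂uniform01 :=
      integral_congr_ae (haeq.mono fun t ht => by by_cases h : s < t <;> simp [h, ht])
    exact h1.trans_eq h2
  calc ∫ ω, X' ω * Y' ω ∂μ = ∫ ω, X ω * Y ω ∂μ := hXY
    _ = ∫ s, (∫ ω, (if s < X ω then Y ω else 0) ∂μ) ∂uniform01 := heq1
    _ ≤ ∫ s, (∫ t, (if s < t then qm t else 0) ∂uniform01) ∂uniform01 :=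
        integral_mono_ae hint1 hint2 hmono
    _ = ∫ x, x * quantileFun Q x ∂uniform01 := hR.symm
end

section
/- Discrete Strassen theorem (existence direction): for finite X, Y, probability vectors p, q, and correspondence Γ : X → Set Y with nonempty values, if q(B) ≤ p(Γ^{-1}(B)) for every B ⊆ Y, then there exists a coupling π of (p,q) supported on the graph of Γ, i.e., π_{xy} > 0 implies y ∈ Γ(x). -/
open Finset in
open Classical in
lemma strassen_layer {X Y : Type*} [Fintype X] [Fintype Y]
    (p : X → ℝ) (q : Y → ℝ) (hp : ∀ x, 0 ≤ p x) (hq : ∀ y, 0 ≤ q y)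
    (Γ : X → Set Y)
    (hdom : ∀ B : Finset Y,
      ∑ y ∈ B, q y ≤ ∑ x ∈ Finset.univ.filter (fun x => ∃ y ∈ B, y ∈ Γ x), p x) :
    ∀ (n : ℕ) (u : X → ℝ) (w : Y → ℝ), (∀ x, 0 ≤ u x) → (∀ y, 0 ≤ w y) →
      (∀ x y, y ∈ Γ x → w y ≤ u x) →
      ((univ.filter fun y => 0 < w y).card + (univ.filter fun x => 0 < u x).card ≤ n) →
      ∑ y, q y * w y ≤ ∑ x, p x * u x := by
  intro n
  induction n with
  | zero =>
    intro u w hu hw hedge hcard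
    have hWe : (univ.filter fun y : Y => 0 < w y) = ∅ := by
      have := Nat.le_zero.mp hcard
      exact card_eq_zero.mp (by omega)
    have hw0 : ∀ y, w y = 0 := by
      intro y
      by_contra h
      have : y ∈ univ.filter fun y : Y => 0 < w y := by
        simp [lt_of_le_of_ne (hw y) (Ne.symm h)]
      simp [hWe] at this
    have h1 : ∑ y, q y * w y = 0 := by
      apply Finset.sum_eq_zero; intro y _; simp [hw0 y]
    rw [h1]
    exact Finset.sum_nonneg fun x _ => mul_nonneg (hp x) (hu x)
  | succ n ih =>
    intro u w hu hw hedge hcard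
    by_cases hWe : (univ.filter fun y : Y => 0 < w y) = ∅
    · have hw0 : ∀ y, w y = 0 := by
        intro y
        by_contra h
        have : y ∈ univ.filter fun y : Y => 0 < w y := by
          simp [lt_of_le_of_ne (hw y) (Ne.symm h)]
        simp [hWe] at this
      have h1 : ∑ y, q y * w y = 0 := by
        apply Finset.sum_eq_zero; intro y _; simp [hw0 y]
      rw [h1]
      exact Finset.sum_nonneg fun x _ => mul_nonneg (hp x) (hu x)
    · set Wy := univ.filter fun y : Y => 0 < w y with hWy
      set Ux := univ.filter fun x : X => 0 < u x with hUx
      set S : Finset ℝ := Wy.image w ∪ Ux.image u with hS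
      have hSne : S.Nonempty := by
        obtain ⟨y, hy⟩ := Finset.nonempty_iff_ne_empty.mpr hWe
        exact ⟨w y, by simp [hS]; exact Or.inl ⟨y, hy, rfl⟩⟩
      set m := S.min' hSne with hm
      have hmS : m ∈ S := S.min'_mem hSne
      have hm_pos : 0 < m := by
        rcases Finset.mem_union.mp hmS with h | h
        · obtain ⟨y, hy, hey⟩ := Finset.mem_image.mp h
          rw [← hey]; exact (Finset.mem_filter.mp hy).2
        · obtain ⟨x, hx, hex⟩ := Finset.mem_image.mp h
          rw [← hex]; exact (Finset.mem_filter.mp hx).2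
      have hmw : ∀ y ∈ Wy, m ≤ w y := fun y hy =>
        S.min'_le _ (Finset.mem_union_left _ (Finset.mem_image_of_mem w hy))
      have hmu : ∀ x ∈ Ux, m ≤ u x := fun x hx =>
        S.min'_le _ (Finset.mem_union_right _ (Finset.mem_image_of_mem u hx))
      set u' : X → ℝ := fun x => if 0 < u x then u x - m else 0 with hu'
      set w' : Y → ℝ := fun y => if 0 < w y then w y - m else 0 with hw'
      have hu'0 : ∀ x, 0 ≤ u' x := by
        intro x; rw [hu']; dsimp only
        split_ifs with h
        · have := hmu x (by simp [hUx, h]); linarith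
        · exact le_refl 0
      have hw'0 : ∀ y, 0 ≤ w' y := by
        intro y; rw [hw']; dsimp only
        split_ifs with h
        · have := hmw y (by simp [hWy, h]); linarith
        · exact le_refl 0
      have hedge' : ∀ x y, y ∈ Γ x → w' y ≤ u' x := by
        intro x y hxy
        rw [hu', hw']; dsimp only
        by_cases h : 0 < w y
        · have hux : 0 < u x := lt_of_lt_of_le h (hedge x y hxy)
          rw [if_pos h, if_pos hux]
          have := hedge x y hxy; linarith
        · rw [if_neg h]; exact hu'0 x
      -- subset relations
      have hsubw : (univ.filter fun y : Y => 0 < w' y) ⊆ Wy := by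
        intro y hy
        rcases Finset.mem_filter.mp hy with ⟨_, hy2⟩
        rw [hw'] at hy2; dsimp only at hy2
        by_cases h : 0 < w y
        · simp [hWy, h]
        · rw [if_neg h] at hy2; exact absurd hy2 (lt_irrefl 0)
      have hsubu : (univ.filter fun x : X => 0 < u' x) ⊆ Ux := by
        intro x hx
        rcases Finset.mem_filter.mp hx with ⟨_, hx2⟩
        rw [hu'] at hx2; dsimp only at hx2
        by_cases h : 0 < u x
        · simp [hUx, h]
        · rw [if_neg h] at hx2; exact absurd hx2 (lt_irrefl 0)
      -- card decrease
      have hcard' : (univ.filter fun y : Y => 0 < w' y).card +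
          (univ.filter fun x : X => 0 < u' x).card ≤ n := by
        rcases Finset.mem_union.mp hmS with h | h
        · obtain ⟨y₀, hy₀, hey⟩ := Finset.mem_image.mp h
          have hsub2 : (univ.filter fun y : Y => 0 < w' y) ⊆ Wy.erase y₀ := by
            intro y hy
            refine Finset.mem_erase.mpr ⟨?_, hsubw hy⟩
            rintro rfl
            rcases Finset.mem_filter.mp hy with ⟨_, hy2⟩
            rw [hw'] at hy2; dsimp only at hy2
            rw [if_pos (Finset.mem_filter.mp hy₀).2, hey] at hy2
            exact lt_irrefl 0 (by linarith)
          have h1 := Finset.card_le_card hsub2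
          rw [Finset.card_erase_of_mem hy₀] at h1
          have h2 := Finset.card_le_card hsubu
          have h3 : 1 ≤ Wy.card := Finset.card_pos.mpr ⟨y₀, hy₀⟩
          omega
        · obtain ⟨x₀, hx₀, hex⟩ := Finset.mem_image.mp h
          have hsub2 : (univ.filter fun x : X => 0 < u' x) ⊆ Ux.erase x₀ := by
            intro x hx
            refine Finset.mem_erase.mpr ⟨?_, hsubu hx⟩
            rintro rfl
            rcases Finset.mem_filter.mp hx with ⟨_, hx2⟩
            rw [hu'] at hx2; dsimp only at hx2
            rw [if_pos (Finset.mem_filter.mp hx₀).2, hex] at hx2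
            exact lt_irrefl 0 (by linarith)
          have h1 := Finset.card_le_card hsub2
          rw [Finset.card_erase_of_mem hx₀] at h1
          have h2 := Finset.card_le_card hsubw
          have h3 : 1 ≤ Ux.card := Finset.card_pos.mpr ⟨x₀, hx₀⟩
          omega
      have IH := ih u' w' hu'0 hw'0 hedge' hcard'
      -- decompositions
      have hdecw : ∑ y, q y * w y = ∑ y, q y * w' y + (∑ y ∈ Wy, q y) * m := by
        have : ∀ y ∈ (univ : Finset Y), q y * w y
            = q y * w' y + (if y ∈ Wy then q y * m else 0) := by
          intro y _
          by_cases h : 0 < w y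
          · rw [if_pos (by simp [hWy, h]), hw']; dsimp only; rw [if_pos h]; ring
          · have h0 : w y = 0 := le_antisymm (not_lt.mp h) (hw y)
            rw [if_neg (by simp [hWy, h]), hw']; dsimp only; rw [if_neg h, h0]; ring
        rw [Finset.sum_congr rfl this, Finset.sum_add_distrib]
        congr 1
        rw [Finset.sum_ite_mem, Finset.univ_inter, Finset.sum_mul]
      have hdecu : ∑ x, p x * u x = ∑ x, p x * u' x + (∑ x ∈ Ux, p x) * m := by
        have : ∀ x ∈ (univ : Finset X), p x * u x
            = p x * u' x + (if x ∈ Ux then p x * m else 0) := by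
          intro x _
          by_cases h : 0 < u x
          · rw [if_pos (by simp [hUx, h]), hu']; dsimp only; rw [if_pos h]; ring
          · have h0 : u x = 0 := le_antisymm (not_lt.mp h) (hu x)
            rw [if_neg (by simp [hUx, h]), hu']; dsimp only; rw [if_neg h, h0]; ring
        rw [Finset.sum_congr rfl this, Finset.sum_add_distrib]
        congr 1
        rw [Finset.sum_ite_mem, Finset.univ_inter, Finset.sum_mul]
      have hqp : ∑ y ∈ Wy, q y ≤ ∑ x ∈ Ux, p x := by
        refine le_trans (hdom Wy) (Finset.sum_le_sum_of_subset_of_nonneg ?_ ?_)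
        · intro x hx
          rcases Finset.mem_filter.mp hx with ⟨_, y, hyW, hyΓ⟩
          have : 0 < w y := by
            have := Finset.mem_filter.mp hyW; exact this.2
          simp [hUx]
          exact lt_of_lt_of_le this (hedge x y hyΓ)
        · intro x _ _; exact hp x
      rw [hdecw, hdecu]
      have : (∑ y ∈ Wy, q y) * m ≤ (∑ x ∈ Ux, p x) * m :=
        mul_le_mul_of_nonneg_right hqp (le_of_lt hm_pos)
      linarith

open Classical in
theorem discrete_strassen_existence
    {X Y : Type*} [Fintype X] [Fintype Y]
    (p : X → ℝ) (q : Y → ℝ) (hp : ∀ x, 0 ≤ p x) (hq : ∀ y, 0 ≤ q y)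
    (hp1 : ∑ x, p x = 1) (hq1 : ∑ y, q y = 1)
    (Γ : X → Set Y) (hΓ : ∀ x, (Γ x).Nonempty)
    (hdom : ∀ B : Finset Y,
      ∑ y ∈ B, q y ≤ ∑ x ∈ Finset.univ.filter (fun x => ∃ y ∈ B, y ∈ Γ x), p x) :
    ∃ π : X → Y → ℝ, (∀ x y, 0 ≤ π x y) ∧
      (∀ x, ∑ y, π x y = p x) ∧ (∀ y, ∑ x, π x y = q y) ∧
      (∀ x y, 0 < π x y → y ∈ Γ x) := by
  classical
  set e : X ⊕ Y → ((X ⊕ Y) → ℝ) := fun i j => if j = i then (1:ℝ) else 0 with he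
  set g : X → Y → ((X ⊕ Y) → ℝ) := fun x y => e (Sum.inl x) + e (Sum.inr y) with hg
  set pq : (X ⊕ Y) → ℝ := Sum.elim p q with hpq
  set P : Finset (X × Y) := Finset.univ.filter (fun xy : X × Y => xy.2 ∈ Γ xy.1) with hP
  set t : Finset ((X ⊕ Y) → ℝ) := P.image (fun xy => g xy.1 xy.2) with ht
  -- membership in convex hull
  have hmem : pq ∈ convexHull ℝ (t : Set ((X ⊕ Y) → ℝ)) := by
    by_contra hpqmem
    obtain ⟨f, c, hlt, hc⟩ := geometric_hahn_banach_closed_point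
      (convex_convexHull ℝ _) (t.finite_toSet.isClosed_convexHull (𝕜 := ℝ)) hpqmem
    set A : X → ℝ := fun x => f (e (Sum.inl x)) with hA
    set B : Y → ℝ := fun y => f (e (Sum.inr y)) with hB
    have hAB : ∀ x y, y ∈ Γ x → A x + B y < c := by
      intro x y hxy
      have hmem' : g x y ∈ convexHull ℝ (t : Set ((X ⊕ Y) → ℝ)) := by
        apply subset_convexHull
        simp only [ht, Finset.coe_image, Set.mem_image, Finset.mem_coe]
        exact ⟨(x, y), by simp [hP, hxy], rfl⟩
      have hfg : f (g x y) = A x + B y := by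
        show f (e (Sum.inl x) + e (Sum.inr y)) = _
        rw [map_add]
      exact hfg ▸ hlt _ hmem'
    have hpq_expand : pq = ∑ i : X ⊕ Y, pq i • e i := by
      funext j
      rw [Finset.sum_apply]
      have : ∀ i, (pq i • e i) j = if j = i then pq i else 0 := by
        intro i; simp [he]
      rw [Finset.sum_congr rfl (fun i _ => this i)]
      simp
    have hfpq : f pq = ∑ x, p x * A x + ∑ y, q y * B y := by
      conv_lhs => rw [hpq_expand]
      rw [map_sum]
      have : ∀ i, f (pq i • e i) = pq i * f (e i) := by
        intro i; rw [map_smul]; simp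
      rw [Finset.sum_congr rfl (fun i _ => this i), Fintype.sum_sum_type]
      simp [hpq, hA, hB]
    set C : ℝ := (∑ x, |A x|) + (∑ y, |c - B y|) with hC
    have hCA : ∀ x, A x ≤ C := by
      intro x
      have h1 : |A x| ≤ ∑ x', |A x'| :=
        Finset.single_le_sum (fun x' _ => abs_nonneg (A x')) (Finset.mem_univ x)
      have h2 : (0:ℝ) ≤ ∑ y, |c - B y| :=
        Finset.sum_nonneg fun y _ => abs_nonneg _
      calc A x ≤ |A x| := le_abs_self _
        _ ≤ C := by rw [hC]; linarith
    have hCB : ∀ y, c - B y ≤ C := by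
      intro y
      have h1 : |c - B y| ≤ ∑ y', |c - B y'| :=
        Finset.single_le_sum (f := fun y' => |c - B y'|)
          (fun y' _ => abs_nonneg _) (Finset.mem_univ y)
      have h2 : (0:ℝ) ≤ ∑ x, |A x| := Finset.sum_nonneg fun x _ => abs_nonneg _
      calc c - B y ≤ |c - B y| := le_abs_self _
        _ ≤ C := by rw [hC]; linarith
    set u : X → ℝ := fun x => C - A x with hu
    set w : Y → ℝ := fun y => B y + C - c with hw
    have key := strassen_layer p q hp hq Γ hdom
      ((Finset.univ.filter fun y : Y => 0 < w y).card
        + (Finset.univ.filter fun x : X => 0 < u x).card)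
      u w (fun x => by simp [hu]; linarith [hCA x])
      (fun y => by simp [hw]; linarith [hCB y])
      (fun x y hxy => by simp [hu, hw]; linarith [hAB x y hxy])
      (le_refl _)
    have hsw : ∑ y, q y * w y = ∑ y, q y * B y + C - c := by
      have : ∀ y, q y * w y = q y * B y + q y * (C - c) := by
        intro y; rw [hw]; ring
      rw [Finset.sum_congr rfl (fun y _ => this y), Finset.sum_add_distrib,
        ← Finset.sum_mul, hq1]
      ring
    have hsu : ∑ x, p x * u x = C - ∑ x, p x * A x := by
      have : ∀ x, p x * u x = p x * C - p x * A x := by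
        intro x; rw [hu]; ring
      rw [Finset.sum_congr rfl (fun x _ => this x), Finset.sum_sub_distrib,
        ← Finset.sum_mul, hp1]
      ring
    rw [hsw, hsu] at key
    rw [hfpq] at hc
    linarith
  -- extract the coupling
  rw [Finset.convexHull_eq] at hmem
  obtain ⟨wgt, hw0, hw1, hcm⟩ := hmem
  have hsum : ∑ v ∈ t, wgt v • v = pq := by
    rw [← hcm, Finset.centerMass_eq_of_sum_1 t id hw1]
    simp
  -- injectivity of g on P
  have hval : ∀ x y j, g x y j =
      (if j = Sum.inl x then (1:ℝ) else 0) + (if j = Sum.inr y then (1:ℝ) else 0) := by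
    intro x y j; simp [hg, he]
  have ginj : ∀ x y x' y', g x y = g x' y' → x = x' ∧ y = y' := by
    intro x y x' y' hxy
    constructor
    · by_contra hne
      have h1 := congrFun hxy (Sum.inl x)
      rw [hval, hval] at h1
      rw [if_pos rfl, if_neg (by simp), if_neg (by simpa using hne),
        if_neg (by simp)] at h1
      norm_num at h1
    · by_contra hne
      have h1 := congrFun hxy (Sum.inr y)
      rw [hval, hval] at h1
      rw [if_neg (by simp), if_pos rfl, if_neg (by simp),
        if_neg (by simpa using hne)] at h1
      norm_num at h1
  have hsum' : ∀ j, ∑ xy ∈ P, wgt (g xy.1 xy.2) * g xy.1 xy.2 j = pq j := by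
    intro j
    have h1 := congrFun hsum j
    rw [Finset.sum_apply] at h1
    rw [← h1, ht, Finset.sum_image]
    · simp
    · intro a ha b hb hab
      obtain ⟨h1', h2'⟩ := ginj _ _ _ _ hab
      exact Prod.ext h1' h2'
  refine ⟨fun x y => if y ∈ Γ x then wgt (g x y) else 0, ?_, ?_, ?_, ?_⟩
  · intro x y
    dsimp only
    split_ifs with h
    · apply hw0
      simp only [ht, Finset.coe_image, Set.mem_image, Finset.mem_coe, Finset.mem_image]
      exact ⟨(x, y), by simp [hP, h], rfl⟩
    · exact le_refl 0
  · intro x₀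
    have h1 := hsum' (Sum.inl x₀)
    simp only [hpq, Sum.elim_inl] at h1
    rw [← h1, hP, Finset.sum_filter, Fintype.sum_prod_type]
    have hx : ∀ x : X, (∑ y, if (x, y).2 ∈ Γ (x, y).1 then
          wgt (g (x, y).1 (x, y).2) * g (x, y).1 (x, y).2 (Sum.inl x₀) else 0)
        = if x = x₀ then (∑ y, if y ∈ Γ x₀ then wgt (g x₀ y) else 0) else 0 := by
      intro x
      by_cases h : x = x₀
      · subst h; rw [if_pos rfl]
        apply Finset.sum_congr rfl
        intro y _
        by_cases h2 : y ∈ Γ x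
        · rw [if_pos h2, if_pos h2, hval, if_pos rfl, if_neg (by simp)]
          ring
        · rw [if_neg h2, if_neg h2]
      · rw [if_neg h]
        apply Finset.sum_eq_zero
        intro y _
        by_cases h2 : y ∈ Γ x
        · rw [if_pos h2, hval, if_neg (by simp [Ne.symm h]), if_neg (by simp)]
          ring
        · rw [if_neg h2]
    rw [Finset.sum_congr rfl (fun x _ => hx x), Finset.sum_ite_eq']
    simp
  · intro y₀
    have h1 := hsum' (Sum.inr y₀)
    simp only [hpq, Sum.elim_inr] at h1
    rw [← h1, hP, Finset.sum_filter, Fintype.sum_prod_type]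
    apply Finset.sum_congr rfl
    intro x _
    have hy : ∀ y : Y, (if (x, y).2 ∈ Γ (x, y).1 then
          wgt (g (x, y).1 (x, y).2) * g (x, y).1 (x, y).2 (Sum.inr y₀) else 0)
        = if y = y₀ then (if y₀ ∈ Γ x then wgt (g x y₀) else 0) else 0 := by
      intro y
      by_cases h : y = y₀
      · subst h
        by_cases h2 : y ∈ Γ x
        · rw [if_pos h2, if_pos rfl, if_pos h2, hval, if_neg (by simp), if_pos rfl]
          ring
        · rw [if_neg h2, if_pos rfl, if_neg h2]
      · rw [if_neg h]
        by_cases h2 : y ∈ Γ x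
        · rw [if_pos h2, hval, if_neg (by simp), if_neg (by simp [Ne.symm h])]
          ring
        · rw [if_neg h2]
    rw [Finset.sum_congr rfl (fun y _ => hy y), Finset.sum_ite_eq']
    simp
  · intro x y hpos
    by_contra h
    simp [h] at hpos
end
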